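/- Let (A,·,α) be a finite-dimensional Hom-pre-Lie algebra and let B be a symmetric nondegenerate bilinear form on A, with associated isomorphism B♯ : A → A* given by ⟨B♯(x), y⟩ = B(x,y). Then B is a Hessian structure on (A,·,α) if and only if (B♯)^{-1} : A* → A is an O-operator on (A,·,α) with respect to the representation (A*, (α^{-1})*, L⋆ − R⋆, −R⋆), where ⟨L⋆(x)(ξ), u⟩ = −⟨ξ, α^{-2}(α(x)·u)⟩ and ⟨R⋆(x)(ξ), u⟩ = −⟨ξ, α^{-2}(u·α(x))⟩ for x,u ∈ A, ξ ∈ A*. -/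

import Mathlib

/-! Put `ξ = B♯ x`, `η = B♯ y` and test against `α w`. The condition `T ∘ (α⁻¹)* = α ∘ T` for
`T = (B♯)⁻¹` is exactly the `α`-invariance of `B`. Given invariance and multiplicativity of `α`,
the `O`-operator identity becomes `B(xy, αw) = B(αy, wx) + B(αx, wy) - B(αy, xw)`, which by the
symmetry of `B` is the Hessian cocycle identity at `(x, w, y)`. -/

/-- A Hom-pre-Lie algebra structure on `A`: a bilinear product and an algebra
morphism `α` satisfying the Hom-pre-Lie identity. -/
def IsHomPreLie {K A : Type*} [Field K] [AddCommGroup A] [Module K A]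
    (mul : A →ₗ[K] A →ₗ[K] A) (α : A →ₗ[K] A) : Prop :=
  (∀ x y, α (mul x y) = mul (α x) (α y)) ∧
  (∀ x y z, mul (mul x y) (α z) - mul (α x) (mul y z)
      = mul (mul y x) (α z) - mul (α y) (mul x z))

/-- A representation of a Hom-Lie algebra `(L, bracket, α)` on `V` with respect to `β`. -/
def IsHomLieRep {K L V : Type*} [Field K] [AddCommGroup L] [Module K L]
    [AddCommGroup V] [Module K V]
    (bracket : L →ₗ[K] L →ₗ[K] L) (α : L →ₗ[K] L)
    (β : V →ₗ[K] V) (ρ : L →ₗ[K] Module.End K V) : Prop :=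
  (∀ x, ρ (α x) ∘ₗ β = β ∘ₗ ρ x) ∧
  (∀ x y, ρ (bracket x y) ∘ₗ β = ρ (α x) ∘ₗ ρ y - ρ (α y) ∘ₗ ρ x)

/-- A representation `(V, β, ρ, μ)` of a Hom-pre-Lie algebra `(A, mul, α)`:
`ρ` is a representation of the sub-adjacent Hom-Lie algebra (whose bracket is the
commutator `mul - mul.flip`) with respect to `β`, together with the two compatibility
conditions for `μ`. -/
def IsHomPreLieRep {K A V : Type*} [Field K] [AddCommGroup A] [Module K A]
    [AddCommGroup V] [Module K V]
    (mul : A →ₗ[K] A →ₗ[K] A) (α : A →ₗ[K] A)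
    (β : V →ₗ[K] V) (ρ μ : A →ₗ[K] Module.End K V) : Prop :=
  IsHomLieRep (mul - mul.flip) α β ρ ∧
  (∀ x, β ∘ₗ μ x = μ (α x) ∘ₗ β) ∧
  (∀ x y, μ (α y) ∘ₗ μ x - μ (mul x y) ∘ₗ β = μ (α y) ∘ₗ ρ x - ρ (α x) ∘ₗ μ y)

/-- The twisted dual map `ρ⋆ : A → gl(V*)`, defined by
`⟨ρ⋆(x)(ξ), u⟩ = −⟨ξ, β⁻²(ρ(α(x))(u))⟩`. -/
noncomputable def starRep {K A V : Type*} [Field K] [AddCommGroup A] [Module K A]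
    [AddCommGroup V] [Module K V]
    (α : A →ₗ[K] A) (β : V ≃ₗ[K] V) (ρ : A →ₗ[K] Module.End K V) :
    A →ₗ[K] Module.End K (V →ₗ[K] K) where
  toFun x := - (((β.symm.toLinearMap ∘ₗ β.symm.toLinearMap) ∘ₗ ρ (α x)).dualMap :
      Module.End K (Module.Dual K V))
  map_add' x y := by
    ext ξ u
    simp [LinearMap.dualMap_apply]
    abel
  map_smul' c x := by
    ext ξ u
    simp [LinearMap.dualMap_apply]

instance starRepAddCommGroup {K A V : Type*} [Field K] [AddCommGroup A] [Module K A]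
    [AddCommGroup V] [Module K V] :
    AddCommGroup (A →ₗ[K] Module.End K (V →ₗ[K] K)) :=
  @LinearMap.addCommGroup K K A (Module.End K (V →ₗ[K] K)) _ _ _ _ _ _ _

/-- An `O`-operator `T : V → A` on a Hom-pre-Lie algebra `(A, mul, α)` with
respect to a representation `(V, β, ρ, μ)`:
`T ∘ β = α ∘ T` and `T(u)·T(v) = T(ρ(T(u))(v) + μ(T(v))(u))`. -/
def IsOOperator {K A V : Type*} [Field K] [AddCommGroup A] [Module K A]
    [AddCommGroup V] [Module K V]
    (mul : A →ₗ[K] A →ₗ[K] A) (α : A →ₗ[K] A) (β : V →ₗ[K] V)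
    (ρ μ : A →ₗ[K] Module.End K V) (T : V →ₗ[K] A) : Prop :=
  (∀ v, T (β v) = α (T v)) ∧
  (∀ u v, mul (T u) (T v) = T (ρ (T u) v + μ (T v) u))

/-- A Hessian structure on a Hom-pre-Lie algebra `(A, mul, α)`: a symmetric
nondegenerate bilinear form `B` which is `α`-invariant and a 2-cocycle with
coefficients in the trivial representation. -/
def IsHessian {K A : Type*} [Field K] [AddCommGroup A] [Module K A]
    (mul : A →ₗ[K] A →ₗ[K] A) (α : A →ₗ[K] A) (B : A →ₗ[K] A →ₗ[K] K) : Prop :=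
  (∀ x y, B x y = B y x) ∧
  (∀ x, (∀ y, B x y = 0) → x = 0) ∧
  (∀ x y, B (α x) (α y) = B x y) ∧
  (∀ x y z, B (mul x y) (α z) - B (α x) (mul y z)
      = B (mul y x) (α z) - B (α y) (mul x z))

section

variable {K A : Type*} [Field K] [AddCommGroup A] [Module K A]

-- `LinearMap.sub_apply` and `LinearMap.neg_apply` do not fire through `starRepAddCommGroup`.
theorem starRepAddCommGroup_sub_apply {V : Type*} [AddCommGroup V] [Module K V]
    (f g : A →ₗ[K] Module.End K (V →ₗ[K] K)) (x : A) : (f - g) x = f x - g x :=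
  rfl

theorem starRepAddCommGroup_neg_apply {V : Type*} [AddCommGroup V] [Module K V]
    (f : A →ₗ[K] Module.End K (V →ₗ[K] K)) (x : A) : (-f) x = -(f x) :=
  rfl

theorem starRep_apply_apply {V : Type*} [AddCommGroup V] [Module K V]
    (α : A →ₗ[K] A) (β : V ≃ₗ[K] V) (ρ : A →ₗ[K] Module.End K V) (x : A)
    (ξ : Module.Dual K V) (u : V) :
    starRep α β ρ x ξ u = -ξ (β.symm (β.symm (ρ (α x) u))) :=
  rfl

theorem apply_symm_right_of_invariant {α : A ≃ₗ[K] A} {B : A →ₗ[K] A →ₗ[K] K}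
    (hinv : ∀ x y, B (α x) (α y) = B x y) (x y : A) : B x (α.symm y) = B (α x) y := by
  rw [← hinv, α.apply_symm_apply]

theorem symm_comp_dualMap_symm_eq_iff_invariant (α : A ≃ₗ[K] A) {B : A →ₗ[K] A →ₗ[K] K}
    {e : A ≃ₗ[K] Module.Dual K A} (he : ∀ x y, e x y = B x y) :
    (∀ ξ, e.symm (α.symm.toLinearMap.dualMap ξ) = α (e.symm ξ)) ↔
      ∀ x y, B (α x) (α y) = B x y := by
  rw [e.surjective.forall]
  refine forall_congr' fun x => ?_
  rw [e.symm_apply_apply, LinearEquiv.symm_apply_eq, LinearMap.ext_iff, α.surjective.forall]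
  refine forall_congr' fun y => ?_
  simp only [LinearMap.dualMap_apply, LinearEquiv.coe_coe, α.symm_apply_apply, he]
  exact eq_comm

theorem symm_oOperator_identity_iff (mul : A →ₗ[K] A →ₗ[K] A) (α : A ≃ₗ[K] A)
    {B : A →ₗ[K] A →ₗ[K] K} {e : A ≃ₗ[K] Module.Dual K A} (he : ∀ x y, e x y = B x y)
    (hmul : ∀ x y, α (mul x y) = mul (α x) (α y)) (hinv : ∀ x y, B (α x) (α y) = B x y) :
    (∀ ξ η, mul (e.symm ξ) (e.symm η) =
      e.symm ((starRep (α : A →ₗ[K] A) α mul - starRep (α : A →ₗ[K] A) α mul.flip)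
        (e.symm ξ) η + (-starRep (α : A →ₗ[K] A) α mul.flip) (e.symm η) ξ)) ↔
      ∀ x y w, B (mul x y) (α w) = B (α y) (mul w x) + B (α x) (mul w y) - B (α y) (mul x w) := by
  rw [e.surjective.forall]
  refine forall_congr' fun x => ?_
  rw [e.surjective.forall]
  refine forall_congr' fun y => ?_
  rw [e.symm_apply_apply, e.symm_apply_apply, LinearEquiv.eq_symm_apply, LinearMap.ext_iff,
    α.surjective.forall]
  refine forall_congr' fun w => ?_
  simp only [starRepAddCommGroup_sub_apply, starRepAddCommGroup_neg_apply, LinearMap.sub_apply,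
    LinearMap.neg_apply, LinearMap.add_apply, starRep_apply_apply,
    LinearMap.flip_apply, LinearEquiv.coe_coe, he, ← hmul, α.symm_apply_apply,
    apply_symm_right_of_invariant hinv]
  constructor <;> intro h <;> linear_combination h

theorem cocycle_iff_of_symm {mul : A →ₗ[K] A →ₗ[K] A} {α : A →ₗ[K] A}
    {B : A →ₗ[K] A →ₗ[K] K} (hsym : ∀ x y, B x y = B y x) :
    (∀ x y z, B (mul x y) (α z) - B (α x) (mul y z) = B (mul y x) (α z) - B (α y) (mul x z)) ↔
      ∀ x y w, B (mul x y) (α w) = B (α y) (mul w x) + B (α x) (mul w y) - B (α y) (mul x w) := by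
  constructor
  · intro hcoc x y w
    linear_combination hcoc x w y + hsym (mul x y) (α w) + hsym (α y) (mul x w)
      - hsym (α y) (mul w x)
  · intro h x y z
    linear_combination h x y z - h y x z

end

theorem hessian_iff_oOperator_general
    {K A : Type*} [Field K] [AddCommGroup A] [Module K A]
    (mul : A →ₗ[K] A →ₗ[K] A) (α : A ≃ₗ[K] A)
    (hA : IsHomPreLie mul (α : A →ₗ[K] A))
    (B : A →ₗ[K] A →ₗ[K] K)
    (hsym : ∀ x y, B x y = B y x)
    (hnd : ∀ x, (∀ y, B x y = 0) → x = 0)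
    -- `e` is the associated isomorphism `B♯ : A ≃ A*`:
    (e : A ≃ₗ[K] Module.Dual K A) (he : ∀ x y, e x y = B x y) :
    IsHessian mul (α : A →ₗ[K] A) B ↔
      IsOOperator mul (α : A →ₗ[K] A)
        (α.symm.toLinearMap.dualMap)
        (starRep (α : A →ₗ[K] A) α mul - starRep (α : A →ₗ[K] A) α mul.flip)
        (- starRep (α : A →ₗ[K] A) α mul.flip)
        (e.symm : Module.Dual K A →ₗ[K] A) := by
  have hmul : ∀ x y, α (mul x y) = mul (α x) (α y) := hA.1
  constructor
  · rintro ⟨-, -, hinv, hcoc⟩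
    exact ⟨(symm_comp_dualMap_symm_eq_iff_invariant α he).2 hinv,
      (symm_oOperator_identity_iff mul α he hmul hinv).2 ((cocycle_iff_of_symm hsym).1 hcoc)⟩
  · rintro ⟨htwist, hid⟩
    have hinv := (symm_comp_dualMap_symm_eq_iff_invariant α he).1 htwist
    exact ⟨hsym, hnd, hinv,
      (cocycle_iff_of_symm hsym).2 ((symm_oOperator_identity_iff mul α he hmul hinv).1 hid)⟩

/-- Let `(A,·,α)` be a finite-dimensional Hom-pre-Lie algebra and
`B` a symmetric nondegenerate bilinear form on `A`, with associated isomorphism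
`B♯ : A → A*`, `⟨B♯(x), y⟩ = B(x,y)`.  Then `B` is a Hessian structure on `(A,·,α)`
if and only if `(B♯)⁻¹ : A* → A` is an `O`-operator on `(A,·,α)` with respect to
the representation `(A*, (α⁻¹)*, L⋆ − R⋆, −R⋆)` (the dual of the regular
representation, with `L = mul`, `R = mul.flip`). -/
theorem hessian_iff_oOperator
    {K A : Type*} [Field K] [AddCommGroup A] [Module K A] [FiniteDimensional K A]
    (mul : A →ₗ[K] A →ₗ[K] A) (α : A ≃ₗ[K] A)
    (hA : IsHomPreLie mul (α : A →ₗ[K] A))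
    (B : A →ₗ[K] A →ₗ[K] K)
    (hsym : ∀ x y, B x y = B y x)
    (hnd : ∀ x, (∀ y, B x y = 0) → x = 0)
    -- `e` is the associated isomorphism `B♯ : A ≃ A*`:
    (e : A ≃ₗ[K] Module.Dual K A) (he : ∀ x y, e x y = B x y) :
    IsHessian mul (α : A →ₗ[K] A) B ↔
      IsOOperator mul (α : A →ₗ[K] A)
        (α.symm.toLinearMap.dualMap)
        (starRep (α : A →ₗ[K] A) α mul - starRep (α : A →ₗ[K] A) α mul.flip)
        (- starRep (α : A →ₗ[K] A) α mul.flip)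
        (e.symm : Module.Dual K A →ₗ[K] A) :=
  hessian_iff_oOperator_general mul α hA B hsym hnd e he
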